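/- arXiv:2306.08504 — 2 statements merged into one kernel-verified Lean document; each statement's English description precedes it below -/
import Mathlib

section
/- Let P be a finite set of points in the Euclidean plane ℝ² and let y be any point of ℝ². Then there exists a minimum spanning tree T of P ∪ {y} such that for each i ∈ {0, …, 5}, at most one neighbour of y in T lies in the cone K_i(y), and if such a neighbour w exists then dist(y, w) ≤ dist(y, x) for every x ∈ P ∩ K_i(y). -/
/-!
Take any minimum spanning tree `T` of `P ∪ {y}`. By the cut property, an edge `yw` of `T` is no
longer than any edge joining the two components of `T - yw`. Two points of a cone of angle `π/3`
at `y` are closer to each other than the farther one is to `y`. Hence a point `x` of the cone of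
`w` with `|yx| ≤ |yw|` lies on `w`'s side of the cut (otherwise `xw` would be a shorter edge
across it), and then `yx` crosses the cut, so `|yw| ≤ |yx|`. A second neighbour `w'` of `y` in
the cone with `|yw'| ≤ |yw|` would thus lie on `w`'s side, yet it is joined to `y` in `T - yw`.
-/

open scoped BigOperators

noncomputable section

/-- The Euclidean plane. -/
abbrev Pt : Type := EuclideanSpace ℝ (Fin 2)

/-- The length of an edge (an unordered pair of points): the Euclidean
distance between its endpoints. -/
def edgeLen : Sym2 Pt → ℝ :=
  Sym2.lift ⟨fun a b => dist a b, fun a b => dist_comm a b⟩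

/-- The total length of a graph on the plane: the sum of the Euclidean
lengths of its edges. -/
def glength (G : SimpleGraph Pt) : ℝ := ∑ᶠ e ∈ G.edgeSet, edgeLen e

/-- `G` is a spanning tree of the point set `V`: all its edges join points of
`V`, it is acyclic, and all points of `V` are pairwise connected in `G`. -/
def IsSpanningTreeOn (V : Set Pt) (G : SimpleGraph Pt) : Prop :=
  (∀ ⦃x y : Pt⦄, G.Adj x y → x ∈ V ∧ y ∈ V) ∧ G.IsAcyclic ∧
    ∀ x ∈ V, ∀ y ∈ V, G.Reachable x y

/-- `G` is a minimum spanning tree of the point set `V`. -/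
def IsMSTOn (V : Set Pt) (G : SimpleGraph Pt) : Prop :=
  IsSpanningTreeOn V G ∧
    ∀ H : SimpleGraph Pt, IsSpanningTreeOn V H → glength G ≤ glength H

/-- The `i`-th half-open cone of angle `π/3` apexed at `v`:
points `v + r·(cos θ, sin θ)` with `r > 0` and `θ ∈ [iπ/3, (i+1)π/3)`. -/
def cone (v : Pt) (i : Fin 6) : Set Pt :=
  { q | ∃ r : ℝ, 0 < r ∧ ∃ θ : ℝ,
      (i : ℕ) * Real.pi / 3 ≤ θ ∧ θ < ((i : ℕ) + 1) * Real.pi / 3 ∧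
      q = v + r • (WithLp.equiv 2 (Fin 2 → ℝ)).symm ![Real.cos θ, Real.sin θ] }

open SimpleGraph

namespace SimpleGraph

variable {V : Type*} {G : SimpleGraph V}

lemma edgeSet_subset_sym2_of_adj {s : Set V} (h : ∀ ⦃x y : V⦄, G.Adj x y → x ∈ s ∧ y ∈ s) :
    G.edgeSet ⊆ s.sym2 := by
  rintro ⟨x, y⟩ hxy
  exact h hxy

lemma finite_setOf_edgeSet_subset {s : Set (Sym2 V)} (hs : s.Finite) :
    {G : SimpleGraph V | G.edgeSet ⊆ s}.Finite :=
  hs.finite_subsets.preimage edgeSet_injective.injOn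

lemma Reachable.reachable_deleteEdges_or {u v x z : V} (hxz : G.Reachable x z)
    (hz : (G.deleteEdges {s(u, v)}).Reachable z u ∨ (G.deleteEdges {s(u, v)}).Reachable z v) :
    (G.deleteEdges {s(u, v)}).Reachable x u ∨ (G.deleteEdges {s(u, v)}).Reachable x v := by
  obtain ⟨p⟩ := hxz
  induction p with
  | nil => exact hz
  | @cons x x' _ hadj _ ih =>
    by_cases he : s(x, x') = s(u, v)
    · rcases Sym2.eq_iff.mp he with ⟨rfl, -⟩ | ⟨rfl, -⟩
      · exact Or.inl .rfl
      · exact Or.inr .rfl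
    · have hD : (G.deleteEdges {s(u, v)}).Adj x x' := (deleteEdges_adj ..).mpr ⟨hadj, he⟩
      exact (ih hz).imp hD.reachable.trans hD.reachable.trans

lemma deleteEdges_sup_edge_of_adj {u v : V} (huv : G.Adj u v) :
    G.deleteEdges {s(u, v)} ⊔ edge u v = G := by
  ext x y
  simp only [sup_adj, deleteEdges_adj, edge_adj, Set.mem_singleton_iff, Sym2.eq_iff]
  constructor
  · rintro (⟨h, -⟩ | ⟨⟨rfl, rfl⟩ | ⟨rfl, rfl⟩, -⟩)
    exacts [h, huv, huv.symm]
  · intro h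
    by_cases he : x = u ∧ y = v ∨ x = v ∧ y = u
    exacts [Or.inr ⟨he, h.ne⟩, Or.inl ⟨h, he⟩]

lemma IsAcyclic.not_reachable_deleteEdges (hG : G.IsAcyclic) {u v : V} (huv : G.Adj u v) :
    ¬(G.deleteEdges {s(u, v)}).Reachable u v :=
  isBridge_iff.mp (isAcyclic_iff_forall_adj_isBridge.mp hG huv)

end SimpleGraph

lemma Set.Finite.sym2 {α : Type*} {s : Set α} (hs : s.Finite) : s.sym2.Finite := by
  rw [Set.sym2_eq_mk_image]
  exact (hs.prod hs).image _

section SpanningTrees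

variable {V : Set Pt}

lemma glength_sup_edge {G : SimpleGraph Pt} (hG : G.edgeSet.Finite) {a b : Pt} (hab : a ≠ b)
    (hnadj : ¬G.Adj a b) : glength (G ⊔ edge a b) = glength G + dist a b := by
  rw [glength, edgeSet_sup, edgeSet_edge_of_ne hab, Set.union_singleton,
    finsum_mem_insert (a := s(a, b)) _ hnadj hG, add_comm]
  rfl

lemma glength_deleteEdges_add {G : SimpleGraph Pt} (hG : G.edgeSet.Finite) {u v : Pt}
    (huv : G.Adj u v) : glength (G.deleteEdges {s(u, v)}) + dist u v = glength G := by
  conv_rhs => rw [← deleteEdges_sup_edge_of_adj huv]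
  refine (glength_sup_edge (hG.subset (edgeSet_mono (deleteEdges_le _))) huv.ne ?_).symm
  simp [deleteEdges_adj]

lemma IsSpanningTreeOn.edgeSet_finite {T : SimpleGraph Pt} (hT : IsSpanningTreeOn V T)
    (hV : V.Finite) : T.edgeSet.Finite :=
  hV.sym2.subset (edgeSet_subset_sym2_of_adj hT.1)

lemma exists_isSpanningTreeOn (V : Set Pt) : ∃ T : SimpleGraph Pt, IsSpanningTreeOn V T := by
  obtain ⟨T, hle, hT, hreach⟩ :=
    exists_isAcyclic_reachable_eq_le (G := fromRel fun x y => x ∈ V ∧ y ∈ V)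
  refine ⟨T, fun x y h => ((fromRel_adj _ x y).mp (hle h)).2.elim id And.symm, hT,
    fun x hx y hy => ?_⟩
  rw [hreach]
  by_cases hxy : x = y
  · exact hxy ▸ .rfl
  · exact Adj.reachable ((fromRel_adj _ x y).mpr ⟨hxy, .inl ⟨hx, hy⟩⟩)

lemma exists_isMSTOn (hV : V.Finite) : ∃ T : SimpleGraph Pt, IsMSTOn V T := by
  have hfin : {T : SimpleGraph Pt | IsSpanningTreeOn V T}.Finite :=
    (finite_setOf_edgeSet_subset hV.sym2).subset fun T hT => edgeSet_subset_sym2_of_adj hT.1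
  exact Set.exists_min_image _ glength hfin (exists_isSpanningTreeOn V)

lemma IsSpanningTreeOn.exchange {T : SimpleGraph Pt} (hT : IsSpanningTreeOn V T) {u v a b : Pt}
    (huv : T.Adj u v) (ha : a ∈ V) (hb : b ∈ V)
    (hnr : ¬(T.deleteEdges {s(u, v)}).Reachable a b) :
    IsSpanningTreeOn V (T.deleteEdges {s(u, v)} ⊔ edge a b) := by
  obtain ⟨hsupp, hacyc, hconn⟩ := hT
  set D := T.deleteEdges {s(u, v)}
  have hab : a ≠ b := fun h => hnr (h ▸ .rfl)
  have hside : ∀ x ∈ V, D.Reachable x u ∨ D.Reachable x v := fun x hx =>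
    (hconn x hx u (hsupp huv).1).reachable_deleteEdges_or (.inl .rfl)
  have hmono : ∀ {x z : Pt}, D.Reachable x z → (D ⊔ edge a b).Reachable x z :=
    fun h => h.mono le_sup_left
  have hab' : (D ⊔ edge a b).Reachable a b := Adj.reachable (by simp [edge_adj, hab])
  have huv' : (D ⊔ edge a b).Reachable u v := by
    rcases hside a ha with hau | hav <;> rcases hside b hb with hbu | hbv
    · exact absurd (hau.trans hbu.symm) hnr
    · exact (hmono hau.symm).trans (hab'.trans (hmono hbv))
    · exact (hmono hbu.symm).trans (hab'.symm.trans (hmono hav))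
    · exact absurd (hav.trans hbv.symm) hnr
  have hto_u : ∀ x ∈ V, (D ⊔ edge a b).Reachable x u := fun x hx =>
    (hside x hx).elim hmono fun hxv => (hmono hxv).trans huv'.symm
  refine ⟨fun x z hxz => ?_, (hacyc.anti (deleteEdges_le _)).sup_edge_of_not_reachable hnr,
    fun x hx z hz => (hto_u x hx).trans (hto_u z hz).symm⟩
  rcases hxz with h | h
  · exact hsupp h.1
  · rcases ((edge_adj ..).mp h).1 with ⟨rfl, rfl⟩ | ⟨rfl, rfl⟩
    exacts [⟨ha, hb⟩, ⟨hb, ha⟩]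

lemma IsMSTOn.dist_le_of_not_reachable (hV : V.Finite) {T : SimpleGraph Pt} (hT : IsMSTOn V T)
    {u v a b : Pt} (huv : T.Adj u v) (ha : a ∈ V) (hb : b ∈ V)
    (hnr : ¬(T.deleteEdges {s(u, v)}).Reachable a b) : dist u v ≤ dist a b := by
  have hfin := hT.1.edgeSet_finite hV
  have hmin := hT.2 _ (hT.1.exchange huv ha hb hnr)
  have hab : a ≠ b := fun h => hnr (h ▸ .rfl)
  rw [glength_sup_edge (hfin.subset (edgeSet_mono (deleteEdges_le _))) hab
    (fun h => hnr h.reachable), ← glength_deleteEdges_add hfin huv] at hmin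
  linarith

end SpanningTrees

section Cones

open Real
open scoped RealInnerProductSpace

lemma norm_sub_lt_of_norm_le_of_lt_two_mul_inner {E : Type*} [NormedAddCommGroup E]
    [InnerProductSpace ℝ E] {x y : E} (hle : ‖x‖ ≤ ‖y‖) (hxy : ‖x‖ * ‖y‖ < 2 * ⟪x, y⟫) :
    ‖x - y‖ < ‖y‖ := by
  refine lt_of_pow_lt_pow_left₀ 2 (norm_nonneg y) ?_
  rw [norm_sub_sq_real]
  nlinarith [norm_nonneg x]

lemma one_half_lt_cos_of_abs_lt {t : ℝ} (ht : |t| < π / 3) : 1 / 2 < cos t := by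
  rw [← cos_abs, ← cos_pi_div_three]
  exact cos_lt_cos_of_nonneg_of_le_pi (abs_nonneg t) (by linarith [pi_pos]) ht

def unitVec (θ : ℝ) : Pt := (WithLp.equiv 2 (Fin 2 → ℝ)).symm ![cos θ, sin θ]

lemma inner_unitVec (θ₁ θ₂ : ℝ) : ⟪unitVec θ₁, unitVec θ₂⟫ = cos (θ₁ - θ₂) := by
  simp [unitVec, PiLp.inner_apply, Fin.sum_univ_two, cos_sub]
  ring

lemma norm_unitVec (θ : ℝ) : ‖unitVec θ‖ = 1 := by
  have h := real_inner_self_eq_norm_sq (unitVec θ)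
  rw [inner_unitVec, sub_self, cos_zero] at h
  nlinarith [norm_nonneg (unitVec θ)]

lemma mem_cone_iff {v q : Pt} {i : Fin 6} :
    q ∈ cone v i ↔ ∃ r : ℝ, 0 < r ∧ ∃ θ : ℝ,
      (i : ℕ) * π / 3 ≤ θ ∧ θ < ((i : ℕ) + 1) * π / 3 ∧ q = v + r • unitVec θ :=
  Iff.rfl

lemma dist_lt_of_mem_cone {v w₁ w₂ : Pt} {i : Fin 6} (h₁ : w₁ ∈ cone v i) (h₂ : w₂ ∈ cone v i)
    (hle : dist v w₁ ≤ dist v w₂) : dist w₁ w₂ < dist v w₂ := by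
  obtain ⟨r₁, hr₁, θ₁, hlo₁, hhi₁, rfl⟩ := mem_cone_iff.mp h₁
  obtain ⟨r₂, hr₂, θ₂, hlo₂, hhi₂, rfl⟩ := mem_cone_iff.mp h₂
  have hcos : 1 / 2 < cos (θ₁ - θ₂) :=
    one_half_lt_cos_of_abs_lt (abs_lt.mpr ⟨by linarith, by linarith⟩)
  have hnorm : ∀ {r : ℝ} (θ : ℝ), 0 < r → ‖r • unitVec θ‖ = r := fun θ hr => by
    rw [norm_smul, norm_unitVec, mul_one, Real.norm_of_nonneg hr.le]
  rw [dist_self_add_right, dist_self_add_right] at hle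
  rw [dist_add_left, dist_eq_norm, dist_self_add_right]
  refine norm_sub_lt_of_norm_le_of_lt_two_mul_inner hle ?_
  rw [hnorm θ₁ hr₁, hnorm θ₂ hr₂, real_inner_smul_left, real_inner_smul_right, inner_unitVec]
  nlinarith [mul_pos hr₁ hr₂]

end Cones

namespace IsMSTOn

variable {V : Set Pt} {T : SimpleGraph Pt} {y w : Pt}

lemma reachable_deleteEdges_of_mem_cone (hV : V.Finite) (hT : IsMSTOn V T) (hyw : T.Adj y w)
    {x : Pt} {i : Fin 6} (hx : x ∈ V) (hxi : x ∈ cone y i) (hwi : w ∈ cone y i)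
    (hle : dist y x ≤ dist y w) : (T.deleteEdges {s(y, w)}).Reachable x w := by
  by_contra hnr
  have := hT.dist_le_of_not_reachable hV hyw hx (hT.1.1 hyw).2 hnr
  linarith [dist_lt_of_mem_cone hxi hwi hle]

lemma dist_le_of_mem_cone (hV : V.Finite) (hT : IsMSTOn V T) (hyw : T.Adj y w) {x : Pt}
    {i : Fin 6} (hx : x ∈ V) (hxi : x ∈ cone y i) (hwi : w ∈ cone y i) :
    dist y w ≤ dist y x := by
  by_contra! hlt
  have hxw := hT.reachable_deleteEdges_of_mem_cone hV hyw hx hxi hwi hlt.le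
  have hyx : ¬(T.deleteEdges {s(y, w)}).Reachable y x := fun h =>
    hT.1.2.1.not_reachable_deleteEdges hyw (h.trans hxw)
  exact hlt.not_ge (hT.dist_le_of_not_reachable hV hyw (hT.1.1 hyw).1 hx hyx)

lemma eq_of_adj_of_mem_cone (hV : V.Finite) (hT : IsMSTOn V T) {w₁ w₂ : Pt} {i : Fin 6}
    (hyw₁ : T.Adj y w₁) (hyw₂ : T.Adj y w₂) (h₁ : w₁ ∈ cone y i) (h₂ : w₂ ∈ cone y i)
    (hle : dist y w₁ ≤ dist y w₂) : w₁ = w₂ := by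
  by_contra hne
  have hD : (T.deleteEdges {s(y, w₂)}).Adj y w₁ :=
    (deleteEdges_adj ..).mpr ⟨hyw₁, fun h => hne (Sym2.congr_right.mp h)⟩
  exact hT.1.2.1.not_reachable_deleteEdges hyw₂ <| hD.reachable.trans <|
    hT.reachable_deleteEdges_of_mem_cone hV hyw₂ (hT.1.1 hyw₁).2 h₁ h₂ hle

end IsMSTOn

theorem stmt4 (P : Finset Pt) (y : Pt) :
    ∃ T : SimpleGraph Pt, IsMSTOn (insert y ↑P) T ∧
      ∀ i : Fin 6,
        (∀ w₁ w₂ : Pt, T.Adj y w₁ → T.Adj y w₂ →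
          w₁ ∈ cone y i → w₂ ∈ cone y i → w₁ = w₂) ∧
        ∀ w : Pt, T.Adj y w → w ∈ cone y i →
          ∀ x ∈ (P : Set Pt) ∩ cone y i, dist y w ≤ dist y x := by
  have hV : (insert y ↑P : Set Pt).Finite := P.finite_toSet.insert y
  obtain ⟨T, hT⟩ := exists_isMSTOn hV
  refine ⟨T, hT, fun i => ⟨fun w₁ w₂ hyw₁ hyw₂ h₁ h₂ => ?_, fun w hyw hw x hx => ?_⟩⟩
  · rcases le_total (dist y w₁) (dist y w₂) with hle | hle
    · exact hT.eq_of_adj_of_mem_cone hV hyw₁ hyw₂ h₁ h₂ hle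
    · exact (hT.eq_of_adj_of_mem_cone hV hyw₂ hyw₁ h₂ h₁ hle).symm
  · exact hT.dist_le_of_mem_cone hV hyw (Set.mem_insert_of_mem y hx.1) hx.2 hw
end
end

section
/- Let P be a nonempty finite set of points in the Euclidean plane ℝ², let s ∈ ℝ² \ P, and let T' be a spanning tree of P ∪ {s} in which s has at most two neighbours. Then there exists a spanning tree T of P whose total length is at most the total length of T'. (In particular, a Steiner point of degree at most two never decreases the length of a minimum spanning tree.) -/
/-!
Delete `s` and join its at most two neighbours `a`, `b` by the segment `ab`. Every path of `T'`
through `s` enters and leaves via `a` or `b`, so the new graph still connects `P`, and by the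
triangle inequality `|ab| ≤ |sa| + |sb|` it is no longer than `T'`. Any spanning forest of it is
then a spanning tree of `P`, and no longer.
-/

open scoped BigOperators

noncomputable section

lemma Set.exists_subset_pair_of_ncard_le_two {α : Type*} [Nonempty α] {N : Set α}
    (hN : N.Finite) (h2 : N.ncard ≤ 2) : ∃ a b, N ⊆ {a, b} ∧ (a ≠ b → a ∈ N ∧ b ∈ N) := by
  interval_cases h : N.ncard
  · obtain rfl := (Set.ncard_eq_zero hN).mp h
    exact ⟨Classical.arbitrary α, _, Set.empty_subset _, fun hne => (hne rfl).elim⟩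
  · obtain ⟨a, rfl⟩ := Set.ncard_eq_one.mp h
    exact ⟨a, a, by simp, fun hne => (hne rfl).elim⟩
  · obtain ⟨a, b, -, rfl⟩ := Set.ncard_eq_two.mp h
    exact ⟨a, b, subset_rfl, fun _ => by simp⟩

namespace SimpleGraph

variable {V W : Type*}

lemma edgeSet_finite_of_adj_mem {U : Set V} (hU : U.Finite) {G : SimpleGraph V}
    (hG : ∀ ⦃x y⦄, G.Adj x y → x ∈ U ∧ y ∈ U) : G.edgeSet.Finite :=
  hU.toFinset.sym2.finite_toSet.subset fun e he => by
    induction e using Sym2.ind with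
    | _ x y => simpa using hG he

lemma Reachable.map_of_forall_adj {G : SimpleGraph V} {H : SimpleGraph W} (f : V → W)
    (hf : ∀ ⦃x y⦄, G.Adj x y → H.Reachable (f x) (f y)) {x y : V} (h : G.Reachable x y) :
    H.Reachable (f x) (f y) := by
  obtain ⟨p⟩ := h
  induction p with
  | nil => rfl
  | cons hadj _ ih => exact (hf hadj).trans ih

def bypass (G : SimpleGraph V) (s a b : V) : SimpleGraph V :=
  G.deleteIncidenceSet s ⊔ edge a b

variable {G : SimpleGraph V} {s a b : V}

lemma bypass_adj_mem {U : Set V} (hG : ∀ ⦃x y⦄, G.Adj x y → x ∈ insert s U ∧ y ∈ insert s U)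
    (hab : a ≠ b → G.Adj s a ∧ G.Adj s b) :
    ∀ ⦃x y⦄, (G.bypass s a b).Adj x y → x ∈ U ∧ y ∈ U := by
  have hnbr : ∀ {c}, G.Adj s c → c ∈ U := fun hc => (hG hc).2.resolve_left hc.ne'
  rintro x y (hxy | hxy)
  · obtain ⟨hxy, hx, hy⟩ := deleteIncidenceSet_adj.mp hxy
    exact ⟨(hG hxy).1.resolve_left hx, (hG hxy).2.resolve_left hy⟩
  · obtain ⟨⟨rfl, rfl⟩ | ⟨rfl, rfl⟩, hne⟩ := (edge_adj _ _ _ _).mp hxy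
    · exact ⟨hnbr (hab hne).1, hnbr (hab hne).2⟩
    · exact ⟨hnbr (hab hne.symm).2, hnbr (hab hne.symm).1⟩

lemma Reachable.bypass (hN : G.neighborSet s ⊆ {a, b}) {x y : V} (hx : x ≠ s) (hy : y ≠ s)
    (h : G.Reachable x y) : (G.bypass s a b).Reachable x y := by
  classical
  set H := G.bypass s a b
  have hnbr : ∀ {c}, G.Adj s c → H.Reachable a c := by
    intro c hc
    obtain rfl | rfl := hN hc
    · rfl
    · obtain rfl | hne := eq_or_ne a c
      · rfl
      · exact Adj.reachable (Or.inr ((edge_adj _ _ _ _).mpr ⟨Or.inl ⟨rfl, rfl⟩, hne⟩))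
  let f : V → V := fun v => if v = s then a else v
  have hf : ∀ ⦃u v⦄, G.Adj u v → H.Reachable (f u) (f v) := by
    intro u v huv
    by_cases hu : u = s
    · subst hu
      simpa [f, huv.ne'] using hnbr huv
    by_cases hv : v = s
    · subst hv
      simpa [f, huv.ne] using (hnbr huv.symm).symm
    simpa [f, hu, hv] using
      Adj.reachable (G := H) (Or.inl (deleteIncidenceSet_adj.mpr ⟨huv, hu, hv⟩))
  simpa [f, hx, hy] using h.map_of_forall_adj f hf

end SimpleGraph

open SimpleGraph

lemma edgeLen_mk (x y : Pt) : edgeLen s(x, y) = dist x y := rfl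

lemma edgeLen_nonneg (e : Sym2 Pt) : 0 ≤ edgeLen e := by
  induction e using Sym2.ind with
  | _ x y => exact dist_nonneg (x := x) (y := y)

lemma finsum_mem_edgeLen_nonneg (S : Set (Sym2 Pt)) : 0 ≤ ∑ᶠ e ∈ S, edgeLen e :=
  finsum_nonneg fun e => finsum_nonneg fun _ => edgeLen_nonneg e

lemma finsum_mem_edgeLen_mono {S T : Set (Sym2 Pt)} (hT : T.Finite) (hST : S ⊆ T) :
    ∑ᶠ e ∈ S, edgeLen e ≤ ∑ᶠ e ∈ T, edgeLen e := by
  rw [← finsum_mem_add_sdiff hST hT]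
  exact le_add_of_nonneg_right (finsum_mem_edgeLen_nonneg _)

lemma glength_mono {G H : SimpleGraph Pt} (hH : H.edgeSet.Finite) (hGH : G ≤ H) :
    glength G ≤ glength H :=
  finsum_mem_edgeLen_mono hH (edgeSet_mono hGH)

lemma glength_sup_le {G H : SimpleGraph Pt} (hG : G.edgeSet.Finite) (hH : H.edgeSet.Finite) :
    glength (G ⊔ H) ≤ glength G + glength H := by
  rw [glength, glength, glength, edgeSet_sup, ← finsum_mem_union_inter hG hH]
  exact le_add_of_nonneg_right (finsum_mem_edgeLen_nonneg _)

lemma glength_edge (a b : Pt) : glength (edge a b) = dist a b := by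
  obtain rfl | hab := eq_or_ne a b
  · simp [glength]
  · rw [glength, edgeSet_edge_of_ne hab, finsum_mem_singleton, edgeLen_mk]

lemma glength_eq_glength_deleteIncidenceSet_add {G : SimpleGraph Pt} (hG : G.edgeSet.Finite)
    (x : Pt) :
    glength G = glength (G.deleteIncidenceSet x) + ∑ᶠ e ∈ G.incidenceSet x, edgeLen e := by
  rw [glength, glength, edgeSet_deleteIncidenceSet, add_comm,
    finsum_mem_add_sdiff (G.incidenceSet_subset x) hG]

lemma dist_le_finsum_incidenceSet {G : SimpleGraph Pt} (hG : G.edgeSet.Finite) {x a b : Pt}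
    (hab : a ≠ b) (ha : G.Adj x a) (hb : G.Adj x b) :
    dist a b ≤ ∑ᶠ e ∈ G.incidenceSet x, edgeLen e := by
  have hpair : {s(x, a), s(x, b)} ⊆ G.incidenceSet x := by
    rintro e (rfl | rfl)
    · exact ⟨ha, Sym2.mem_mk_left x a⟩
    · exact ⟨hb, Sym2.mem_mk_left x b⟩
  have hne : s(x, a) ≠ s(x, b) := fun h => hab (Sym2.congr_right.mp h)
  calc dist a b ≤ dist x a + dist x b := dist_triangle_left a b x
    _ = ∑ᶠ e ∈ {s(x, a), s(x, b)}, edgeLen e := by rw [finsum_mem_pair hne]; rfl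
    _ ≤ ∑ᶠ e ∈ G.incidenceSet x, edgeLen e :=
      finsum_mem_edgeLen_mono (hG.subset (G.incidenceSet_subset x)) hpair

lemma glength_bypass_le {G : SimpleGraph Pt} (hG : G.edgeSet.Finite) {s a b : Pt}
    (hab : a ≠ b → G.Adj s a ∧ G.Adj s b) : glength (G.bypass s a b) ≤ glength G := by
  have hshort : dist a b ≤ ∑ᶠ e ∈ G.incidenceSet s, edgeLen e := by
    obtain rfl | hne := eq_or_ne a b
    · simpa using finsum_mem_edgeLen_nonneg _
    · exact dist_le_finsum_incidenceSet hG hne (hab hne).1 (hab hne).2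
  calc glength (G.bypass s a b)
      ≤ glength (G.deleteIncidenceSet s) + glength (edge a b) :=
        glength_sup_le (hG.subset (edgeSet_mono (G.deleteIncidenceSet_le s)))
          ((Set.finite_singleton _).subset edgeSet_edge_subset)
    _ ≤ glength G := by
        rw [glength_edge, glength_eq_glength_deleteIncidenceSet_add hG s]
        gcongr

lemma exists_isSpanningTreeOn_le {V : Set Pt} {G : SimpleGraph Pt}
    (hG : ∀ ⦃x y⦄, G.Adj x y → x ∈ V ∧ y ∈ V) (hconn : ∀ x ∈ V, ∀ y ∈ V, G.Reachable x y) :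
    ∃ T ≤ G, IsSpanningTreeOn V T := by
  obtain ⟨T, hTG, hT, hreach⟩ := G.exists_isAcyclic_reachable_eq_le
  exact ⟨T, hTG, fun x y h => hG (hTG h), hT, by simpa [hreach] using hconn⟩

theorem stmt5_general (P : Finset Pt) (s : Pt) (hs : s ∉ P)
    (T' : SimpleGraph Pt) (hT' : IsSpanningTreeOn (insert s ↑P) T')
    (hdeg : (T'.neighborSet s).ncard ≤ 2) :
    ∃ T : SimpleGraph Pt, IsSpanningTreeOn ↑P T ∧ glength T ≤ glength T' := by
  obtain ⟨hT'V, -, hT'conn⟩ := hT'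
  have hVfin : (insert s (P : Set Pt)).Finite := P.finite_toSet.insert s
  obtain ⟨a, b, hN, hab⟩ :=
    Set.exists_subset_pair_of_ncard_le_two (hVfin.subset fun _ hc => (hT'V hc).2) hdeg
  have hGV := bypass_adj_mem hT'V hab
  have hGconn : ∀ x ∈ (P : Set Pt), ∀ y ∈ (P : Set Pt), (T'.bypass s a b).Reachable x y :=
    fun x hx y hy => (hT'conn x (Set.mem_insert_of_mem s hx) y (Set.mem_insert_of_mem s hy)).bypass
      hN (ne_of_mem_of_not_mem hx hs) (ne_of_mem_of_not_mem hy hs)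
  obtain ⟨T, hTG, hT⟩ := exists_isSpanningTreeOn_le hGV hGconn
  exact ⟨T, hT, (glength_mono (edgeSet_finite_of_adj_mem P.finite_toSet hGV) hTG).trans
    (glength_bypass_le (edgeSet_finite_of_adj_mem hVfin hT'V) hab)⟩

theorem stmt5 (P : Finset Pt) (hP : P.Nonempty) (s : Pt) (hs : s ∉ P)
    (T' : SimpleGraph Pt) (hT' : IsSpanningTreeOn (insert s ↑P) T')
    (hdeg : (T'.neighborSet s).ncard ≤ 2) :
    ∃ T : SimpleGraph Pt, IsSpanningTreeOn ↑P T ∧ glength T ≤ glength T' :=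
  stmt5_general P s hs T' hT' hdeg

end
end
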